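/- arXiv:2509.16435 — 2 statements merged into one kernel-verified Lean document; each statement's English description precedes it below -/
import Mathlib

section
/- For every real V with 1+V ≠ 0, the identity F(V, -(1+V)) = ((γ-1)/2)·G(V, -(1+V)) holds. -/
theorem stmt_2 (n γ lam κ : ℝ) (hn : n ≠ 0) (hγ : γ ≠ 0)
    (Vstar α k1 k2 k3 : ℝ)
    (hV : Vstar = (κ - 2*(lam-1))/(n*γ))
    (hα : α = ((lam-1) + (κ/2)*(γ-1))/γ)
    (hk1 : k1 = 1 + (n-1)*(γ-1)/2)
    (hk2 : k2 = ((n-1)*(γ-1) + (γ-3)*(lam-1))/2)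
    (hk3 : k3 = (γ-1)*(lam-1)/2)
    (G F : ℝ → ℝ → ℝ)
    (hG : ∀ V C, G V C = n*C^2*(V - Vstar) - V*(1+V)*(lam+V))
    (hF : ∀ V C, F V C = C*(C^2*(1 + α/(1+V)) - k1*(1+V)^2 + k2*(1+V) - k3))
    (V : ℝ) (hV1 : 1 + V ≠ 0) :
    F V (-(1+V)) = ((γ-1)/2) * G V (-(1+V)) := by
  rw [hF, hG, hV, hα, hk1, hk2, hk3]
  field_simp
  ring
end

section
/- Assume n > 0, γ > 1, μ := λ-1 satisfies 0 < μ < (κ+n)/2 (condition A), μ < n(γ-1)/2 (condition B), and α := (μ + (κ/2)(γ-1))/γ > 0 (condition C). Then 0 < μ/(n·W*) < σ < k3/α, where W* = 1 + (κ - 2μ)/(nγ), σ = γμ/(κ+n), and k3 = (γ-1)μ/2. -/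
/-!
Write `d = n(γ-1) - 2μ`, the slack in condition B. The three quantities are
`γμ / (κ + n + d)`, `γμ / (κ + n)` and `γμ / (κ + n - d/(γ-1))`, with numerator `γμ > 0`;
the last denominator is `2γα/(γ-1) > 0` by condition C, so as `d > 0` the chain follows from
the antitonicity of `t ↦ γμ/t` on positive reals.
-/

lemma div_mul_one_add_div_eq {n γ κ μ : ℝ} (hn : n ≠ 0) (hγ : γ ≠ 0) :
    μ / (n * (1 + (κ - 2*μ)/(n*γ))) = γ*μ / (κ + n + (n*(γ-1) - 2*μ)) := by
  have hnW : n * (1 + (κ - 2*μ)/(n*γ)) = (κ + n + (n*(γ-1) - 2*μ)) / γ := by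
    field_simp; ring
  rw [hnW, div_div_eq_mul_div, mul_comm]

lemma div_div_eq_div_sub_div_sub_one {n γ κ μ : ℝ} (hγ : γ ≠ 1) :
    (γ-1)*μ/2 / ((μ + κ/2*(γ-1))/γ) = γ*μ / (κ + n - (n*(γ-1) - 2*μ)/(γ-1)) := by
  have hγ' : γ - 1 ≠ 0 := sub_ne_zero.mpr hγ
  rw [div_div_eq_mul_div]
  field_simp
  ring

theorem stmt_4_general (n γ κ : ℝ) (hn : 0 < n) (hγ : 1 < γ)
    (μ Wstar σ k3 α : ℝ)
    (hW : Wstar = 1 + (κ - 2*μ)/(n*γ))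
    (hσ : σ = γ*μ/(κ+n))
    (hk3 : k3 = (γ-1)*μ/2)
    (hα : α = (μ + (κ/2)*(γ-1))/γ)
    (hA : 0 < μ ∧ μ < (κ+n)/2)
    (hB : μ < n*(γ-1)/2)
    (hC : 0 < α) :
    0 < μ/(n*Wstar) ∧ μ/(n*Wstar) < σ ∧ σ < k3/α := by
  obtain ⟨hμ, hμκn⟩ := hA
  subst hW hσ hk3 hα
  have hγ0 : 0 < γ := by linarith
  have hγ1 : 0 < γ - 1 := by linarith
  have hγμ : 0 < γ * μ := mul_pos hγ0 hμ
  have hκn : 0 < κ + n := by linarith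
  have hd : 0 < n*(γ-1) - 2*μ := by linarith
  have hden : 0 < κ + n - (n*(γ-1) - 2*μ)/(γ-1) := by
    have hnum : 0 < μ + κ/2*(γ-1) := (div_pos_iff_of_pos_right hγ0).mp hC
    have : κ + n - (n*(γ-1) - 2*μ)/(γ-1) = 2 * (μ + κ/2*(γ-1)) / (γ-1) := by
      field_simp; ring
    rw [this]; positivity
  rw [div_mul_one_add_div_eq hn.ne' hγ0.ne', div_div_eq_div_sub_div_sub_one (n := n) hγ.ne']
  refine ⟨div_pos hγμ (by linarith), div_lt_div_of_pos_left hγμ hκn (by linarith), ?_⟩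
  exact div_lt_div_of_pos_left hγμ hden (by linarith [div_pos hd hγ1])

theorem stmt_4 (n γ lam κ : ℝ) (hn : 0 < n) (hγ : 1 < γ) (hlam : 1 < lam)
    (μ Wstar σ k3 α : ℝ)
    (hμ : μ = lam - 1)
    (hW : Wstar = 1 + (κ - 2*μ)/(n*γ))
    (hσ : σ = γ*μ/(κ+n))
    (hk3 : k3 = (γ-1)*μ/2)
    (hα : α = (μ + (κ/2)*(γ-1))/γ)
    (hA : 0 < μ ∧ μ < (κ+n)/2)
    (hB : μ < n*(γ-1)/2)
    (hC : 0 < α) :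
    0 < μ/(n*Wstar) ∧ μ/(n*Wstar) < σ ∧ σ < k3/α :=
  stmt_4_general n γ κ hn hγ μ Wstar σ k3 α hW hσ hk3 hα hA hB hC
end
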